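/- arXiv:1207.6850 — 2 statements merged into one kernel-verified Lean document; each statement's English description precedes it below -/
import Mathlib

section
/- Let s = (s_1,…,s_n) be a sequence of positive integers with s_1 = 1, and let s* = (s_1,…,s_n,1). Then for every nonnegative integer i, ℓ^i(Par_{s*}) = #{ r ∈ Ψ_n : asc_s(r) = i }; that is, the number of lattice points of Par_{s*} ⊂ ℝ^{n+1} whose last coordinate is i equals the number of elements of Ψ_n with exactly i s-ascents. (Consequently the δ-vector of P_s satisfies δ_{P_s,i} = #{ r ∈ Ψ_n : asc_s(r) = i }.) -/
/-- The generator vectors of the s-lecture hall parallelepiped: `lhVec s j` has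
`i`-th coordinate `s i` for `i ≥ j` and `0` for `i < j`. -/
def lhVec {n : ℕ} (s : Fin n → ℕ) (j : Fin n) : Fin n → ℝ :=
  fun i => if j ≤ i then (s i : ℝ) else 0

/-- The s-lecture hall parallelepiped: the half-open parallelepiped generated by
the vectors `lhVec s j`. -/
def lhPar {n : ℕ} (s : Fin n → ℕ) : Set (Fin n → ℝ) :=
  {x | ∃ c : Fin n → ℝ, (∀ j, 0 ≤ c j ∧ c j < 1) ∧ x = ∑ j, c j • lhVec s j}

/-- `lhEll S i` is the number of lattice points of `S ⊆ ℝ^N` whose last coordinate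
equals `i`. -/
noncomputable def lhEll {N : ℕ} (S : Set (Fin N → ℝ)) (i : ℕ) : ℕ :=
  Set.ncard {x : Fin N → ℤ | (fun k => (x k : ℝ)) ∈ S ∧
    ∀ j : Fin N, (j : ℕ) = N - 1 → x j = (i : ℤ)}

/-- The number of s-descents of `r`: indices `i` with `r i / s i > r (i+1) / s (i+1)`. -/
noncomputable def sDes {N : ℕ} (s : Fin N → ℕ) (r : Fin N → ℤ) : ℕ :=
  Set.ncard {i : Fin N | ∃ h : (i : ℕ) + 1 < N,
    (r i : ℚ) / (s i : ℚ) > (r ⟨(i : ℕ) + 1, h⟩ : ℚ) / (s ⟨(i : ℕ) + 1, h⟩ : ℚ)}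

/-- The number of s-ascents of `r`: indices `i` with `r i / s i < r (i+1) / s (i+1)`. -/
noncomputable def sAsc {N : ℕ} (s : Fin N → ℕ) (r : Fin N → ℤ) : ℕ :=
  Set.ncard {i : Fin N | ∃ h : (i : ℕ) + 1 < N,
    (r i : ℚ) / (s i : ℚ) < (r ⟨(i : ℕ) + 1, h⟩ : ℚ) / (s ⟨(i : ℕ) + 1, h⟩ : ℚ)}

/-- The number of (regular) descents of `r`: indices `i` with `r i > r (i+1)`. -/
noncomputable def rDes {N : ℕ} (r : Fin N → ℤ) : ℕ :=
  Set.ncard {i : Fin N | ∃ h : (i : ℕ) + 1 < N, r ⟨(i : ℕ) + 1, h⟩ < r i}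

/-- The number of (regular) ascents of `r`: indices `i` with `r i < r (i+1)`. -/
noncomputable def rAsc {N : ℕ} (r : Fin N → ℤ) : ℕ :=
  Set.ncard {i : Fin N | ∃ h : (i : ℕ) + 1 < N, r i < r ⟨(i : ℕ) + 1, h⟩}

/-- The number of s-descents of `r` at positions strictly before position `i`. -/
noncomputable def sDesLt {N : ℕ} (s : Fin N → ℕ) (r : Fin N → ℤ) (i : Fin N) : ℕ :=
  Set.ncard {j : Fin N | (j : ℕ) < (i : ℕ) ∧ ∃ h : (j : ℕ) + 1 < N,
    (r j : ℚ) / (s j : ℚ) > (r ⟨(j : ℕ) + 1, h⟩ : ℚ) / (s ⟨(j : ℕ) + 1, h⟩ : ℚ)}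

/-- `lhPsi s` is the set `Ψ_n = {0,…,s 0 − 1} × ⋯ × {0,…,s (n-1) − 1}`. -/
def lhPsi {n : ℕ} (s : Fin n → ℕ) : Set (Fin n → ℤ) :=
  {r | ∀ i, 0 ≤ r i ∧ r i < (s i : ℤ)}

/-- `inDilate s t lam` says that the lattice point `lam` satisfies
`0 ≤ lam 0 / s 0 ≤ lam 1 / s 1 ≤ ⋯ ≤ lam (n-1) / s (n-1) ≤ t`,
i.e. lies in the `t`-th dilate of the s-lecture hall polytope. -/
def inDilate {n : ℕ} (s : Fin n → ℕ) (t : ℕ) (lam : Fin n → ℤ) : Prop :=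
  (∀ i : Fin n, (i : ℕ) = 0 → 0 ≤ (lam i : ℚ) / (s i : ℚ)) ∧
  (∀ i : Fin n, ∀ h : (i : ℕ) + 1 < n,
    (lam i : ℚ) / (s i : ℚ) ≤ (lam ⟨(i : ℕ) + 1, h⟩ : ℚ) / (s ⟨(i : ℕ) + 1, h⟩ : ℚ)) ∧
  (∀ i : Fin n, (i : ℕ) = n - 1 → (lam i : ℚ) / (s i : ℚ) ≤ (t : ℚ))


/-- chain condition -/
def lhChain {N : ℕ} (s : Fin N → ℕ) (x : Fin N → ℤ) : Prop :=
  (∀ h : 0 < N, 0 ≤ ((x ⟨0,h⟩ : ℚ)/(s ⟨0,h⟩ : ℚ)) ∧ ((x ⟨0,h⟩ : ℚ)/(s ⟨0,h⟩ : ℚ)) < 1) ∧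
  (∀ k : Fin N, ∀ h : (k:ℕ)+1 < N,
     (x k : ℚ)/(s k : ℚ) ≤ (x ⟨(k:ℕ)+1,h⟩ : ℚ)/(s ⟨(k:ℕ)+1,h⟩ : ℚ) ∧
     (x ⟨(k:ℕ)+1,h⟩ : ℚ)/(s ⟨(k:ℕ)+1,h⟩ : ℚ) < (x k : ℚ)/(s k : ℚ) + 1)

lemma sum_lhVec_apply {N : ℕ} (s : Fin N → ℕ) (c : Fin N → ℝ) (i : Fin N) :
    (∑ j, c j • lhVec s j) i = (s i : ℝ) * ∑ j ∈ Finset.univ.filter (· ≤ i), c j := by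
  simp only [Finset.sum_apply, Pi.smul_apply, lhVec, smul_eq_mul, mul_ite, mul_zero]
  rw [Finset.sum_ite, Finset.sum_const_zero, add_zero, Finset.mul_sum]
  exact Finset.sum_congr rfl (fun j _ => mul_comm _ _)

lemma filter_le_succ {N : ℕ} (k : Fin N) (h : (k:ℕ)+1 < N) :
    Finset.univ.filter (· ≤ (⟨(k:ℕ)+1,h⟩ : Fin N)) =
      insert (⟨(k:ℕ)+1,h⟩ : Fin N) (Finset.univ.filter (· ≤ k)) := by
  ext j
  simp only [Finset.mem_filter, Finset.mem_univ, true_and, Finset.mem_insert]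
  constructor
  · intro hj
    rcases eq_or_lt_of_le (show (j:ℕ) ≤ (k:ℕ)+1 from hj) with he | hl
    · exact Or.inl (Fin.ext he)
    · exact Or.inr (Nat.lt_succ_iff.mp hl)
  · rintro (rfl | hj)
    · exact le_refl _
    · exact le_trans hj (by exact Nat.le_succ _)

lemma partial_sum_succ {N : ℕ} (c : Fin N → ℝ) (k : Fin N) (h : (k:ℕ)+1 < N) :
    ∑ j ∈ Finset.univ.filter (· ≤ (⟨(k:ℕ)+1,h⟩ : Fin N)), c j =
      (∑ j ∈ Finset.univ.filter (· ≤ k), c j) + c ⟨(k:ℕ)+1,h⟩ := by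
  rw [filter_le_succ k h, Finset.sum_insert, add_comm]
  simp only [Finset.mem_filter, Finset.mem_univ, true_and]
  intro hle
  exact absurd (show ((k:ℕ)+1 : ℕ) ≤ k from hle) (by omega)

lemma filter_le_zero {N : ℕ} (h : 0 < N) :
    Finset.univ.filter (· ≤ (⟨0,h⟩ : Fin N)) = {(⟨0,h⟩ : Fin N)} := by
  ext j
  simp only [Finset.mem_filter, Finset.mem_univ, true_and, Finset.mem_singleton]
  constructor
  · intro hj; exact Fin.ext (Nat.le_zero.mp hj)
  · rintro rfl; exact le_refl _

lemma mem_lhPar_iff {N : ℕ} (s : Fin N → ℕ) (hs : ∀ i, 0 < s i) (x : Fin N → ℤ) :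
    ((fun k => (x k : ℝ)) ∈ lhPar s) ↔ lhChain s x := by
  have hsR : ∀ i : Fin N, (0:ℝ) < (s i : ℝ) := fun i => by exact_mod_cast hs i
  have hcast : ∀ i : Fin N, (((x i : ℚ)/(s i : ℚ) : ℚ) : ℝ) = (x i : ℝ)/(s i : ℝ) := by
    intro i; push_cast; ring
  constructor
  · rintro ⟨c, hc, hx⟩
    have hU : ∀ i : Fin N, ∑ j ∈ Finset.univ.filter (· ≤ i), c j
        = (((x i : ℚ)/(s i : ℚ) : ℚ) : ℝ) := by
      intro i
      have := congrFun hx i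
      rw [sum_lhVec_apply] at this
      rw [hcast, this, mul_div_cancel_left₀ _ (ne_of_gt (hsR i))]
    constructor
    · intro h
      have h0 := hU ⟨0,h⟩
      rw [filter_le_zero h, Finset.sum_singleton] at h0
      have := hc ⟨0,h⟩
      rw [h0] at this
      exact ⟨by exact_mod_cast this.1, by exact_mod_cast this.2⟩
    · intro k h
      have h1 := hU ⟨(k:ℕ)+1,h⟩
      have h2 := hU k
      rw [partial_sum_succ c k h, h2] at h1
      have := hc ⟨(k:ℕ)+1,h⟩
      constructor
      · have : (((x k : ℚ)/(s k : ℚ) : ℚ) : ℝ) ≤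
            (((x ⟨(k:ℕ)+1,h⟩ : ℚ)/(s ⟨(k:ℕ)+1,h⟩ : ℚ) : ℚ) : ℝ) := by
          rw [← h1]; linarith [this.1]
        exact_mod_cast this
      · have : (((x ⟨(k:ℕ)+1,h⟩ : ℚ)/(s ⟨(k:ℕ)+1,h⟩ : ℚ) : ℚ) : ℝ) <
            (((x k : ℚ)/(s k : ℚ) : ℚ) : ℝ) + 1 := by
          rw [← h1]; linarith [this.2]
        push_cast at this ⊢
        exact_mod_cast this
  · rintro ⟨hz, hstep⟩
    set u : Fin N → ℝ := fun k => (((x k : ℚ)/(s k : ℚ) : ℚ) : ℝ) with hu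
    refine ⟨fun k => if h0 : (k:ℕ) = 0 then u k else u k - u ⟨(k:ℕ)-1, by omega⟩, ?_, ?_⟩
    · intro j
      beta_reduce
      by_cases h0 : (j:ℕ) = 0
      · rw [dif_pos h0]
        have hj : j = ⟨0, j.pos⟩ := Fin.ext h0
        have hzz := hz j.pos
        simp only [hu]
        rw [hj]
        exact ⟨by exact_mod_cast hzz.1, by exact_mod_cast hzz.2⟩
      · rw [dif_neg h0]
        have hlt : (((⟨(j:ℕ)-1, by omega⟩ : Fin N) : ℕ)) + 1 < N :=
          show (j:ℕ)-1+1 < N by omega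
        have hstep' := hstep ⟨(j:ℕ)-1, by omega⟩ hlt
        have he : (⟨(((⟨(j:ℕ)-1, by omega⟩ : Fin N)) : ℕ) + 1, hlt⟩ : Fin N) = j :=
          Fin.ext (show (j:ℕ)-1+1 = (j:ℕ) by omega)
        rw [he] at hstep'
        have h1 : ((((x ⟨(j:ℕ)-1, by omega⟩ : ℚ)/(s ⟨(j:ℕ)-1, by omega⟩ : ℚ)) : ℚ) : ℝ) ≤
            (((x j : ℚ)/(s j : ℚ) : ℚ) : ℝ) := by exact_mod_cast hstep'.1
        have h2 : (((x j : ℚ)/(s j : ℚ) : ℚ) : ℝ) <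
            ((((x ⟨(j:ℕ)-1, by omega⟩ : ℚ)/(s ⟨(j:ℕ)-1, by omega⟩ : ℚ)) : ℚ) : ℝ) + 1 := by
          exact_mod_cast hstep'.2
        simp only [hu]
        constructor
        · linarith
        · linarith
    · funext i
      rw [sum_lhVec_apply]
      have key : ∀ m (hm : m < N), ∑ j ∈ Finset.univ.filter (· ≤ (⟨m,hm⟩ : Fin N)),
          (if h0 : ((j:Fin N):ℕ) = 0 then u j else u j - u ⟨(j:ℕ)-1, by omega⟩) = u ⟨m,hm⟩ := by
        intro m
        induction m with
        | zero => intro hm; rw [filter_le_zero hm, Finset.sum_singleton, dif_pos rfl]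
        | succ m ih =>
          intro hm
          have hm' : m < N := by omega
          have := partial_sum_succ
            (fun j => if h0 : ((j:Fin N):ℕ) = 0 then u j else u j - u ⟨(j:ℕ)-1, by omega⟩)
            ⟨m,hm'⟩ hm
          rw [this, ih hm', dif_neg (by simp)]
          simp only [Nat.add_sub_cancel]
          ring
      rw [key i.val i.isLt]
      simp only [hu, hcast]
      rw [Fin.eta]
      rw [mul_div_cancel₀ _ (ne_of_gt (hsR i))]

/-- The descent predicate. -/
def isDes {N : ℕ} (s : Fin N → ℕ) (r : Fin N → ℤ) (j : Fin N) : Prop :=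
  ∃ h : (j : ℕ) + 1 < N,
    (r j : ℚ) / (s j : ℚ) > (r ⟨(j : ℕ) + 1, h⟩ : ℚ) / (s ⟨(j : ℕ) + 1, h⟩ : ℚ)

lemma sDesLt_zero {N : ℕ} (s : Fin N → ℕ) (r : Fin N → ℤ) (i : Fin N) (h : (i:ℕ) = 0) :
    sDesLt s r i = 0 := by
  unfold sDesLt
  rw [h]
  convert Set.ncard_empty (Fin N)
  ext j; simp

open Classical in
lemma sDesLt_succ {N : ℕ} (s : Fin N → ℕ) (r : Fin N → ℤ) (k : Fin N) (h : (k:ℕ)+1 < N) :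
    sDesLt s r ⟨(k:ℕ)+1, h⟩ = sDesLt s r k + (if isDes s r k then 1 else 0) := by
  unfold sDesLt
  classical
  by_cases hd : isDes s r k
  · rw [if_pos hd]
    have hset : {j : Fin N | (j : ℕ) < ((⟨(k:ℕ)+1,h⟩ : Fin N) : ℕ) ∧ isDes s r j}
        = insert k {j : Fin N | (j : ℕ) < (k:ℕ) ∧ isDes s r j} := by
      ext j
      simp only [Set.mem_setOf_eq, Set.mem_insert_iff]
      constructor
      · rintro ⟨hj, hdj⟩
        rcases Nat.lt_succ_iff_lt_or_eq.mp hj with hl | he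
        · exact Or.inr ⟨hl, hdj⟩
        · exact Or.inl (Fin.ext he)
      · rintro (rfl | ⟨hj, hdj⟩)
        · exact ⟨Nat.lt_succ_self _, hd⟩
        · exact ⟨Nat.lt_succ_of_lt hj, hdj⟩
    rw [show {j : Fin N | (j : ℕ) < ((⟨(k:ℕ)+1,h⟩ : Fin N) : ℕ) ∧ ∃ h : (j : ℕ) + 1 < N,
        (r j : ℚ) / (s j : ℚ) > (r ⟨(j : ℕ) + 1, h⟩ : ℚ) / (s ⟨(j : ℕ) + 1, h⟩ : ℚ)}
        = insert k {j : Fin N | (j : ℕ) < (k:ℕ) ∧ isDes s r j} from hset]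
    rw [Set.ncard_insert_of_notMem (by simp [isDes])]
    rfl
  · rw [if_neg hd, add_zero]
    congr 1
    ext j
    simp only [Set.mem_setOf_eq]
    constructor
    · rintro ⟨hj, hdj⟩
      rcases Nat.lt_succ_iff_lt_or_eq.mp hj with hl | he
      · exact ⟨hl, hdj⟩
      · exact absurd (show isDes s r j from hdj) (by rw [show j = k from Fin.ext he]; exact hd)
    · rintro ⟨hj, hdj⟩
      exact ⟨Nat.lt_succ_of_lt hj, hdj⟩

lemma sDes_eq_sDesLt_last {N : ℕ} (s : Fin N → ℕ) (r : Fin N → ℤ) (hN : 0 < N) :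
    sDes s r = sDesLt s r ⟨N-1, by omega⟩ := by
  unfold sDes sDesLt
  congr 1
  ext j
  simp only [Set.mem_setOf_eq]
  constructor
  · rintro ⟨h, hd⟩
    exact ⟨by omega, h, hd⟩
  · rintro ⟨_, h, hd⟩
    exact ⟨h, hd⟩

lemma snoc_eval {n : ℕ} {α : Type*} (f : Fin n → α) (a : α) (j : Fin (n+1)) (hj : (j:ℕ) < n) :
    (Fin.snoc f a : Fin (n+1) → α) j = f ⟨(j:ℕ), hj⟩ := by
  have hj' : j = Fin.castSucc ⟨(j:ℕ), hj⟩ := Fin.ext rfl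
  conv_lhs => rw [hj']
  rw [Fin.snoc_castSucc]

lemma snoc_eval_last {n : ℕ} {α : Type*} (f : Fin n → α) (a : α) (j : Fin (n+1))
    (hj : (j:ℕ) = n) : (Fin.snoc f a : Fin (n+1) → α) j = a := by
  have hj' : j = Fin.last n := Fin.ext hj
  conv_lhs => rw [hj']
  rw [Fin.snoc_last]

noncomputable def lhE {n : ℕ} (hn : 0 < n) (r : Fin n → ℤ) : ℤ :=
  if r ⟨n-1, by omega⟩ = 0 then 0 else 1

noncomputable def lhPhi {n : ℕ} (hn : 0 < n) (s : Fin n → ℕ) (r : Fin n → ℤ) :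
    Fin (n+1) → ℤ :=
  Fin.snoc (fun k => r k + (s k : ℤ) * (sDesLt s r k : ℤ)) ((sDes s r : ℤ) + lhE hn r)

lemma frac_bounds {n : ℕ} (s : Fin n → ℕ) (hs : ∀ i, 0 < s i) (r : Fin n → ℤ) (hr : r ∈ lhPsi s) (k : Fin n) :
    0 ≤ (r k : ℚ)/(s k : ℚ) ∧ (r k : ℚ)/(s k : ℚ) < 1 ∧
      ((r k : ℚ)/(s k : ℚ) = 0 ↔ r k = 0) := by
  have hsk : (0:ℚ) < (s k : ℚ) := by exact_mod_cast hs k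
  have h1 : (0:ℚ) ≤ (r k : ℚ) := by exact_mod_cast (hr k).1
  have h2 : (r k : ℚ) < (s k : ℚ) := by exact_mod_cast (hr k).2
  refine ⟨div_nonneg h1 (le_of_lt hsk), (div_lt_one hsk).mpr h2, ?_⟩
  rw [div_eq_zero_iff]
  constructor
  · rintro (h | h)
    · exact_mod_cast h
    · exact absurd h (ne_of_gt hsk)
  · intro h; exact Or.inl (by exact_mod_cast h)

lemma phi_div {n : ℕ} (s : Fin n → ℕ) (hs : ∀ i, 0 < s i) (r : Fin n → ℤ) (k : Fin n) :
    ((r k + (s k : ℤ) * (sDesLt s r k : ℤ) : ℤ) : ℚ) / (s k : ℚ)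
      = (r k : ℚ)/(s k : ℚ) + (sDesLt s r k : ℚ) := by
  have hsk : ((s k : ℚ)) ≠ 0 := by
    have := hs k; positivity
  push_cast
  field_simp

lemma chain_lhPhi {n : ℕ} (hn : 0 < n) (s : Fin n → ℕ) (hs : ∀ i, 0 < s i) (h1 : s ⟨0,hn⟩ = 1)
    (r : Fin n → ℤ) (hr : r ∈ lhPsi s) :
    lhChain (Fin.snoc s 1) (lhPhi hn s r) := by
  classical
  have hfr := frac_bounds s hs r hr
  constructor
  · intro h
    have e1 : lhPhi hn s r ⟨0, h⟩ = r ⟨0, hn⟩ + (s ⟨0,hn⟩ : ℤ) * (sDesLt s r ⟨0,hn⟩ : ℤ) :=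
      snoc_eval _ _ _ hn
    have e2 : (Fin.snoc s 1 : Fin (n+1) → ℕ) ⟨0, h⟩ = s ⟨0,hn⟩ := snoc_eval _ _ _ hn
    have hr0 : r ⟨0,hn⟩ = 0 := by
      have := hr ⟨0,hn⟩; rw [h1] at this; omega
    rw [e1, e2, sDesLt_zero s r _ rfl, hr0, h1]
    norm_num
  · intro k hk
    have hkn : (k:ℕ) < n := by omega
    have e1 : lhPhi hn s r k = r ⟨(k:ℕ), hkn⟩ + (s ⟨(k:ℕ), hkn⟩ : ℤ) * (sDesLt s r ⟨(k:ℕ), hkn⟩ : ℤ) :=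
      snoc_eval _ _ _ hkn
    have e2 : (Fin.snoc s 1 : Fin (n+1) → ℕ) k = s ⟨(k:ℕ), hkn⟩ := snoc_eval _ _ _ hkn
    by_cases hcase : (k:ℕ) + 1 < n
    · -- inner step
      have e3 : lhPhi hn s r ⟨(k:ℕ)+1, hk⟩ = r ⟨(k:ℕ)+1, hcase⟩ +
          (s ⟨(k:ℕ)+1, hcase⟩ : ℤ) * (sDesLt s r ⟨(k:ℕ)+1, hcase⟩ : ℤ) :=
        snoc_eval _ _ _ (show ((⟨(k:ℕ)+1, hk⟩ : Fin (n+1)) : ℕ) < n from hcase)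
      have e4 : (Fin.snoc s 1 : Fin (n+1) → ℕ) ⟨(k:ℕ)+1, hk⟩ = s ⟨(k:ℕ)+1, hcase⟩ :=
        snoc_eval _ _ _ (show ((⟨(k:ℕ)+1, hk⟩ : Fin (n+1)) : ℕ) < n from hcase)
      rw [e1, e2, e3, e4, phi_div s hs, phi_div s hs]
      have hrec : sDesLt s r ⟨(k:ℕ)+1, hcase⟩ = sDesLt s r ⟨(k:ℕ), hkn⟩ +
          (if isDes s r ⟨(k:ℕ), hkn⟩ then 1 else 0) :=
        sDesLt_succ s r ⟨(k:ℕ), hkn⟩ (show ((⟨(k:ℕ), hkn⟩ : Fin n) : ℕ) + 1 < n from hcase)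
      rw [hrec]
      have hb1 := hfr ⟨(k:ℕ), hkn⟩
      have hb2 := hfr ⟨(k:ℕ)+1, hcase⟩
      by_cases hdes : isDes s r ⟨(k:ℕ), hkn⟩
      · rw [if_pos hdes]
        obtain ⟨hh, hlt⟩ := hdes
        have hlt' : (r ⟨(k:ℕ)+1, hcase⟩ : ℚ)/(s ⟨(k:ℕ)+1, hcase⟩ : ℚ)
            < (r ⟨(k:ℕ), hkn⟩ : ℚ)/(s ⟨(k:ℕ), hkn⟩ : ℚ) := hlt
        push_cast
        constructor <;> linarith [hb1.1, hb1.2.1, hb2.1, hb2.2.1]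
      · rw [if_neg hdes]
        have hge : (r ⟨(k:ℕ), hkn⟩ : ℚ)/(s ⟨(k:ℕ), hkn⟩ : ℚ) ≤
            (r ⟨(k:ℕ)+1, hcase⟩ : ℚ)/(s ⟨(k:ℕ)+1, hcase⟩ : ℚ) := by
          by_contra hcon
          exact hdes ⟨show ((⟨(k:ℕ), hkn⟩ : Fin n) : ℕ) + 1 < n from hcase, by
            push_neg at hcon
            exact hcon⟩
        push_cast
        constructor <;> linarith [hb1.1, hb1.2.1, hb2.1, hb2.2.1]
    · -- boundary step: (k:ℕ)+1 = n
      have hkn1 : (k:ℕ) = n - 1 := by omega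
      have e3 : lhPhi hn s r ⟨(k:ℕ)+1, hk⟩ = (sDes s r : ℤ) + lhE hn r :=
        snoc_eval_last _ _ _ (show (k:ℕ)+1 = n by omega)
      have e4 : (Fin.snoc s 1 : Fin (n+1) → ℕ) ⟨(k:ℕ)+1, hk⟩ = 1 :=
        snoc_eval_last _ _ _ (show (k:ℕ)+1 = n by omega)
      rw [e1, e2, e3, e4, phi_div s hs]
      have hd : sDes s r = sDesLt s r ⟨(k:ℕ), hkn⟩ := by
        rw [sDes_eq_sDesLt_last s r hn]
        congr 1
        exact Fin.ext (show n - 1 = (k:ℕ) by omega)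
      have hb1 := hfr ⟨(k:ℕ), hkn⟩
      have hE : lhE hn r = if r ⟨(k:ℕ), hkn⟩ = 0 then 0 else 1 := by
        have heq : (⟨n-1, by omega⟩ : Fin n) = (⟨(k:ℕ), hkn⟩ : Fin n) :=
          Fin.ext (show n - 1 = (k:ℕ) by omega)
        unfold lhE
        rw [heq]
      rw [hd, hE]
      by_cases hz : r ⟨(k:ℕ), hkn⟩ = 0
      · rw [if_pos hz]
        have hzz : (r ⟨(k:ℕ), hkn⟩ : ℚ)/(s ⟨(k:ℕ), hkn⟩ : ℚ) = 0 := by rw [hz]; simp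
        push_cast
        rw [hzz]
        norm_num
      · rw [if_neg hz]
        have hpos : 0 < (r ⟨(k:ℕ), hkn⟩ : ℚ)/(s ⟨(k:ℕ), hkn⟩ : ℚ) := by
          rcases lt_or_eq_of_le hb1.1 with hq | hq
          · exact hq
          · exact absurd (hb1.2.2.mp hq.symm) hz
        push_cast
        constructor <;> linarith [hb1.2.1]

lemma div_decomp (s : ℕ) (hs : 0 < s) (a d : ℤ) :
    ((a + (s:ℤ) * d : ℤ) : ℚ)/(s : ℚ) = (a : ℚ)/(s : ℚ) + (d : ℚ) := by
  have hsk : ((s : ℚ)) ≠ 0 := by positivity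
  push_cast
  field_simp

def lhR {n : ℕ} (s : Fin n → ℕ) (x : Fin (n+1) → ℤ) : Fin n → ℤ :=
  fun k => x ⟨(k:ℕ), by omega⟩ % (s k : ℤ)

set_option maxHeartbeats 1000000 in
lemma chain_inv {n : ℕ} (hn : 0 < n) (s : Fin n → ℕ) (hs : ∀ i, 0 < s i) (h1 : s ⟨0,hn⟩ = 1)
    (x : Fin (n+1) → ℤ) (hx : lhChain (Fin.snoc s 1) x) :
    lhR s x ∈ lhPsi s ∧ x = lhPhi hn s (lhR s x) := by
  classical
  set r : Fin n → ℤ := lhR s x with hrdef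
  have hsz : ∀ k : Fin n, (s k : ℤ) ≠ 0 := fun k => by have := hs k; omega
  have hΨ : r ∈ lhPsi s := by
    intro k
    exact ⟨Int.emod_nonneg _ (hsz k), Int.emod_lt_of_pos _ (by exact_mod_cast hs k)⟩
  have hfr := frac_bounds s hs r hΨ
  have hbase : x ⟨0, by omega⟩ = 0 := by
    have h0 := hx.1 (by omega)
    have e2 : (Fin.snoc s 1 : Fin (n+1) → ℕ) ⟨0, by omega⟩ = s ⟨0, hn⟩ := snoc_eval _ _ _ hn
    rw [e2, h1] at h0
    have h0' : (0:ℚ) ≤ (x ⟨0, by omega⟩ : ℚ) ∧ (x ⟨0, by omega⟩ : ℚ) < 1 := by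
      constructor
      · have := h0.1; simpa using this
      · have := h0.2; simpa using this
    have : (0:ℤ) ≤ x ⟨0, by omega⟩ ∧ x ⟨0, by omega⟩ < 1 := by
      exact ⟨by exact_mod_cast h0'.1, by exact_mod_cast h0'.2⟩
    omega
  have key : ∀ m (hm : m < n), x ⟨m, by omega⟩
      = r ⟨m, hm⟩ + (s ⟨m, hm⟩ : ℤ) * (sDesLt s r ⟨m, hm⟩ : ℤ) := by
    intro m
    induction m with
    | zero =>
      intro hm
      have hr0 : r ⟨0, hm⟩ = 0 := by
        rw [hrdef]
        show x ⟨0, by omega⟩ % (s ⟨0, hm⟩ : ℤ) = 0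
        rw [show (⟨0, by omega⟩ : Fin (n+1)) = ⟨0, by omega⟩ from rfl, hbase]
        simp
      rw [sDesLt_zero s r _ rfl, hbase, hr0]
      simp
    | succ m ih =>
      intro hm
      have hm' : m < n := by omega
      have hxm := ih hm'
      have hstep := hx.2 ⟨m, by omega⟩ (show m + 1 < n + 1 by omega)
      have e2 : (Fin.snoc s 1 : Fin (n+1) → ℕ) ⟨m, by omega⟩ = s ⟨m, hm'⟩ :=
        snoc_eval _ _ _ hm'
      have e4 : (Fin.snoc s 1 : Fin (n+1) → ℕ) ⟨m+1, by omega⟩ = s ⟨m+1, hm⟩ :=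
        snoc_eval _ _ _ hm
      rw [e2, e4] at hstep
      obtain ⟨q, hdecomp⟩ : ∃ q : ℤ, x ⟨m+1, by omega⟩
          = r ⟨m+1, hm⟩ + (s ⟨m+1, hm⟩ : ℤ) * q := by
        refine ⟨x ⟨m+1, by omega⟩ / (s ⟨m+1, hm⟩ : ℤ), ?_⟩
        show x ⟨m+1, by omega⟩ = x ⟨m+1, by omega⟩ % (s ⟨m+1, hm⟩ : ℤ)
          + (s ⟨m+1, hm⟩ : ℤ) * (x ⟨m+1, by omega⟩ / (s ⟨m+1, hm⟩ : ℤ))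
        exact (Int.emod_add_mul_ediv _ _).symm
      rw [hdecomp, hxm, div_decomp _ (hs _), div_decomp _ (hs _)] at hstep
      have hb1 := hfr ⟨m, hm'⟩
      have hb2 := hfr ⟨m+1, hm⟩
      have hrec : sDesLt s r ⟨m+1, hm⟩ = sDesLt s r ⟨m, hm'⟩ +
          (if isDes s r ⟨m, hm'⟩ then 1 else 0) :=
        sDesLt_succ s r ⟨m, hm'⟩ (show m + 1 < n from hm)
      by_cases hdes : isDes s r ⟨m, hm'⟩
      · obtain ⟨hh, hlt⟩ := hdes
        have hlt' : (r ⟨m+1, hm⟩ : ℚ)/(s ⟨m+1, hm⟩ : ℚ) < (r ⟨m, hm'⟩ : ℚ)/(s ⟨m, hm'⟩ : ℚ) := hlt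
        have hq1 : ((sDesLt s r ⟨m, hm'⟩ : ℤ) : ℚ) < (q : ℚ) := by
          push_cast at hstep ⊢
          linarith [hstep.1]
        have hq2 : (q : ℚ) < ((sDesLt s r ⟨m, hm'⟩ : ℤ) : ℚ) + 2 := by
          push_cast at hstep ⊢
          linarith [hstep.2, hb1.2.1, hb2.1]
        have hq1' : (sDesLt s r ⟨m, hm'⟩ : ℤ) < q := by exact_mod_cast hq1
        have hq2' : q < (sDesLt s r ⟨m, hm'⟩ : ℤ) + 2 := by exact_mod_cast hq2
        have hqval : q = (sDesLt s r ⟨m, hm'⟩ : ℤ) + 1 := by omega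
        have hdes' : isDes s r ⟨m, hm'⟩ := ⟨hh, hlt⟩
        rw [hdecomp, hrec, if_pos hdes', hqval]
        all_goals (push_cast; ring)
      · have hge : (r ⟨m, hm'⟩ : ℚ)/(s ⟨m, hm'⟩ : ℚ) ≤ (r ⟨m+1, hm⟩ : ℚ)/(s ⟨m+1, hm⟩ : ℚ) := by
          by_contra hcon
          exact hdes ⟨show m + 1 < n from hm, by push_neg at hcon; exact hcon⟩
        have hq1 : ((sDesLt s r ⟨m, hm'⟩ : ℤ) : ℚ) - 1 < (q : ℚ) := by
          push_cast at hstep ⊢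
          linarith [hstep.1, hb1.1, hb2.2.1]
        have hq2 : (q : ℚ) < ((sDesLt s r ⟨m, hm'⟩ : ℤ) : ℚ) + 1 := by
          push_cast at hstep ⊢
          linarith [hstep.2, hb1.1, hb2.2.1, hge]
        have hq1' : (sDesLt s r ⟨m, hm'⟩ : ℤ) - 1 < q := by exact_mod_cast hq1
        have hq2' : q < (sDesLt s r ⟨m, hm'⟩ : ℤ) + 1 := by exact_mod_cast hq2
        have hqval : q = (sDesLt s r ⟨m, hm'⟩ : ℤ) := by omega
        rw [hdecomp, hrec, if_neg hdes, hqval]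
        all_goals (push_cast; ring)
  refine ⟨hΨ, ?_⟩
  funext j
  by_cases hj : (j : ℕ) < n
  · have e1 : lhPhi hn s (lhR s x) j = r ⟨(j:ℕ), hj⟩ +
        (s ⟨(j:ℕ), hj⟩ : ℤ) * (sDesLt s r ⟨(j:ℕ), hj⟩ : ℤ) := snoc_eval _ _ _ hj
    rw [e1, ← key (j:ℕ) hj]
  · have hjn : (j : ℕ) = n := by omega
    have e1 : lhPhi hn s (lhR s x) j = (sDes s r : ℤ) + lhE hn r := snoc_eval_last _ _ _ hjn
    rw [e1]
    have hp1 : n - 1 < n + 1 := by omega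
    have hp1' : n - 1 < n := by omega
    have hp2 : (((⟨n-1, hp1⟩ : Fin (n+1)) : ℕ)) + 1 < n + 1 := show (n-1)+1 < n+1 by omega
    have hstep := hx.2 ⟨n-1, hp1⟩ hp2
    have hidx : (⟨(((⟨n-1, hp1⟩ : Fin (n+1)) : ℕ)) + 1, hp2⟩ : Fin (n+1)) = j :=
      Fin.ext (show (n-1)+1 = (j:ℕ) by omega)
    rw [hidx] at hstep
    have e2 : (Fin.snoc s 1 : Fin (n+1) → ℕ) ⟨n-1, hp1⟩ = s ⟨n-1, hp1'⟩ :=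
      snoc_eval _ _ _ hp1'
    have e4 : (Fin.snoc s 1 : Fin (n+1) → ℕ) j = 1 := snoc_eval_last _ _ _ hjn
    rw [e2, e4] at hstep
    have hxm := key (n-1) hp1'
    rw [hxm, div_decomp _ (hs _)] at hstep
    simp only [Nat.cast_one, div_one] at hstep
    have hd : sDes s r = sDesLt s r ⟨n-1, hp1'⟩ := by
      rw [sDes_eq_sDesLt_last s r hn]
    have hE : lhE hn r = if r ⟨n-1, hp1'⟩ = 0 then (0:ℤ) else 1 := rfl
    have hb1 := hfr ⟨n-1, hp1'⟩
    rw [hd, hE]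
    by_cases hz : r ⟨n-1, hp1'⟩ = 0
    · rw [if_pos hz]
      have hzz : (r ⟨n-1, hp1'⟩ : ℚ)/(s ⟨n-1, hp1'⟩ : ℚ) = 0 := by rw [hz]; simp
      have h1' : ((sDesLt s r ⟨n-1, hp1'⟩ : ℕ) : ℚ) ≤ (x j : ℚ) := by
        push_cast at hstep ⊢
        linarith [hstep.1, hzz]
      have h2' : (x j : ℚ) < ((sDesLt s r ⟨n-1, hp1'⟩ : ℕ) : ℚ) + 1 := by
        push_cast at hstep ⊢
        linarith [hstep.2, hzz]
      have h1'' : ((sDesLt s r ⟨n-1, hp1'⟩ : ℕ) : ℤ) ≤ x j := by exact_mod_cast h1'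
      have h2'' : x j < ((sDesLt s r ⟨n-1, hp1'⟩ : ℕ) : ℤ) + 1 := by exact_mod_cast h2'
      omega
    · rw [if_neg hz]
      have hpos : 0 < (r ⟨n-1, hp1'⟩ : ℚ)/(s ⟨n-1, hp1'⟩ : ℚ) := by
        rcases lt_or_eq_of_le hb1.1 with hq | hq
        · exact hq
        · exact absurd (hb1.2.2.mp hq.symm) hz
      have h1' : ((sDesLt s r ⟨n-1, hp1'⟩ : ℕ) : ℚ) < (x j : ℚ) := by
        push_cast at hstep ⊢
        linarith [hstep.1]
      have h2' : (x j : ℚ) < ((sDesLt s r ⟨n-1, hp1'⟩ : ℕ) : ℚ) + 2 := by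
        push_cast at hstep ⊢
        linarith [hstep.2, hb1.2.1]
      have h1'' : ((sDesLt s r ⟨n-1, hp1'⟩ : ℕ) : ℤ) < x j := by exact_mod_cast h1'
      have h2'' : x j < ((sDesLt s r ⟨n-1, hp1'⟩ : ℕ) : ℤ) + 2 := by exact_mod_cast h2'
      omega

lemma lhR_lhPhi {n : ℕ} (hn : 0 < n) (s : Fin n → ℕ) (hs : ∀ i, 0 < s i)
    (r : Fin n → ℤ) (hr : r ∈ lhPsi s) : lhR s (lhPhi hn s r) = r := by
  funext k
  show lhPhi hn s r ⟨(k:ℕ), by omega⟩ % (s k : ℤ) = r k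
  have e : lhPhi hn s r ⟨(k:ℕ), by omega⟩ = r ⟨(k:ℕ), k.isLt⟩ +
      (s ⟨(k:ℕ), k.isLt⟩ : ℤ) * (sDesLt s r ⟨(k:ℕ), k.isLt⟩ : ℤ) :=
    snoc_eval _ _ _ k.isLt
  rw [e]
  simp only [Fin.eta]
  rw [Int.add_mul_emod_self_left]
  exact Int.emod_eq_of_lt (hr k).1 (hr k).2

lemma step1 {n : ℕ} (hn : 0 < n) (s : Fin n → ℕ) (hs : ∀ i, 0 < s i)
    (h1 : s ⟨0,hn⟩ = 1) (i : ℕ) :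
    {x : Fin (n+1) → ℤ | (fun k => (x k : ℝ)) ∈ lhPar (Fin.snoc s 1) ∧
        ∀ j : Fin (n+1), (j : ℕ) = (n+1) - 1 → x j = (i : ℤ)}
      = lhPhi hn s '' {r | r ∈ lhPsi s ∧ (sDes s r : ℤ) + lhE hn r = (i : ℤ)} := by
  have hs' : ∀ k : Fin (n+1), 0 < (Fin.snoc s 1 : Fin (n+1) → ℕ) k := by
    intro k
    by_cases hk : (k:ℕ) < n
    · rw [snoc_eval _ _ _ hk]; exact hs _
    · rw [snoc_eval_last _ _ _ (by omega)]; norm_num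
  ext x
  simp only [Set.mem_setOf_eq, Set.mem_image]
  constructor
  · rintro ⟨hmem, hlast⟩
    have hchain := (mem_lhPar_iff _ hs' x).mp hmem
    obtain ⟨hΨ, hxeq⟩ := chain_inv hn s hs h1 x hchain
    refine ⟨lhR s x, ⟨hΨ, ?_⟩, hxeq.symm⟩
    have hL := hlast ⟨n, by omega⟩ (by simp)
    rw [hxeq] at hL
    have e : lhPhi hn s (lhR s x) ⟨n, by omega⟩ = (sDes s (lhR s x) : ℤ) + lhE hn (lhR s x) :=
      snoc_eval_last _ _ _ rfl
    rw [e] at hL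
    exact hL
  · rintro ⟨r, ⟨hΨ, hsum⟩, rfl⟩
    constructor
    · exact (mem_lhPar_iff _ hs' _).mpr (chain_lhPhi hn s hs h1 r hΨ)
    · intro j hj
      have e : lhPhi hn s r j = (sDes s r : ℤ) + lhE hn r :=
        snoc_eval_last _ _ _ (show (j:ℕ) = n by omega)
      exact e.trans hsum

lemma step1_card {n : ℕ} (hn : 0 < n) (s : Fin n → ℕ) (hs : ∀ i, 0 < s i)
    (h1 : s ⟨0,hn⟩ = 1) (i : ℕ) :
    Set.ncard {x : Fin (n+1) → ℤ | (fun k => (x k : ℝ)) ∈ lhPar (Fin.snoc s 1) ∧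
        ∀ j : Fin (n+1), (j : ℕ) = (n+1) - 1 → x j = (i : ℤ)}
      = Set.ncard {r | r ∈ lhPsi s ∧ (sDes s r : ℤ) + lhE hn r = (i : ℤ)} := by
  rw [step1 hn s hs h1 i]
  apply Set.ncard_image_of_injOn
  intro a ha b hb heq
  rw [← lhR_lhPhi hn s hs a ha.1, ← lhR_lhPhi hn s hs b hb.1, heq]

def lhCompl {n : ℕ} (s : Fin n → ℕ) (r : Fin n → ℤ) : Fin n → ℤ :=
  fun k => if r k = 0 then 0 else (s k : ℤ) - r k

lemma lhCompl_mem {n : ℕ} (s : Fin n → ℕ) (hs : ∀ i, 0 < s i) (r : Fin n → ℤ)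
    (hr : r ∈ lhPsi s) : lhCompl s r ∈ lhPsi s := by
  intro k
  have h1 := (hr k).1
  have h2 := (hr k).2
  have h3 : (0:ℤ) < (s k : ℤ) := by exact_mod_cast hs k
  unfold lhCompl
  by_cases hz : r k = 0
  · rw [if_pos hz]; omega
  · rw [if_neg hz]; omega

lemma lhCompl_invol {n : ℕ} (s : Fin n → ℕ) (hs : ∀ i, 0 < s i) (r : Fin n → ℤ)
    (hr : r ∈ lhPsi s) : lhCompl s (lhCompl s r) = r := by
  funext k
  have h1 := (hr k).1
  have h2 := (hr k).2
  unfold lhCompl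
  by_cases hz : r k = 0
  · rw [if_pos hz, if_pos rfl, hz]
  · rw [if_neg hz, if_neg (by omega)]
    ring

lemma lhCompl_zero_iff {n : ℕ} (s : Fin n → ℕ) (hs : ∀ i, 0 < s i) (r : Fin n → ℤ)
    (hr : r ∈ lhPsi s) (k : Fin n) : lhCompl s r k = 0 ↔ r k = 0 := by
  have h2 := (hr k).2
  unfold lhCompl
  by_cases hz : r k = 0
  · rw [if_pos hz]; simp [hz]
  · rw [if_neg hz]
    constructor
    · intro h; omega
    · intro h; exact absurd h hz

lemma lhCompl_frac {n : ℕ} (s : Fin n → ℕ) (hs : ∀ i, 0 < s i) (r : Fin n → ℤ)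
    (k : Fin n) (hz : r k ≠ 0) :
    (lhCompl s r k : ℚ)/(s k : ℚ) = 1 - (r k : ℚ)/(s k : ℚ) := by
  have hsk : ((s k : ℚ)) ≠ 0 := by have := hs k; positivity
  unfold lhCompl
  rw [if_neg hz]
  push_cast
  field_simp

lemma ncard_eq_filter_card {α : Type*} [Fintype α] (P : α → Prop) [DecidablePred P] :
    Set.ncard {x | P x} = (Finset.univ.filter P).card := by
  rw [Set.ncard_eq_toFinset_card']
  simp [Set.toFinset_setOf]

open Classical in
set_option maxHeartbeats 1000000 in
lemma key_count {n : ℕ} (hn : 0 < n) (s : Fin n → ℕ) (hs : ∀ i, 0 < s i)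
    (h1 : s ⟨0,hn⟩ = 1) (r : Fin n → ℤ) (hr : r ∈ lhPsi s) :
    (sAsc s (lhCompl s r) : ℤ) = (sDes s r : ℤ) + lhE hn r := by
  classical
  have hr' : lhCompl s r ∈ lhPsi s := lhCompl_mem s hs r hr
  have hfr := frac_bounds s hs r hr
  have hfr' := frac_bounds s hs (lhCompl s r) hr'
  -- fractional value lemmas
  have hgz : ∀ k : Fin n, r k = 0 → (r k : ℚ)/(s k : ℚ) = 0 := by
    intro k hk; rw [hk]; simp
  have hgz' : ∀ k : Fin n, r k = 0 → (lhCompl s r k : ℚ)/(s k : ℚ) = 0 := by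
    intro k hk
    rw [(lhCompl_zero_iff s hs r hr k).mpr hk]; simp
  have hgpos : ∀ k : Fin n, r k ≠ 0 → 0 < (r k : ℚ)/(s k : ℚ) := by
    intro k hk
    rcases lt_or_eq_of_le (hfr k).1 with h | h
    · exact h
    · exact absurd ((hfr k).2.2.mp h.symm) hk
  -- the three predicates
  set PA : Fin n → Prop := fun j => ∃ h : (j:ℕ)+1 < n, r ⟨(j:ℕ)+1,h⟩ ≠ 0 ∧
    (r ⟨(j:ℕ)+1,h⟩ : ℚ)/(s ⟨(j:ℕ)+1,h⟩ : ℚ) < (r j : ℚ)/(s j : ℚ) with hPAdef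
  set PU : Fin n → Prop := fun j => ∃ h : (j:ℕ)+1 < n, r j = 0 ∧ r ⟨(j:ℕ)+1,h⟩ ≠ 0 with hPUdef
  set PD : Fin n → Prop := fun j => ∃ h : (j:ℕ)+1 < n, r j ≠ 0 ∧ r ⟨(j:ℕ)+1,h⟩ = 0 with hPDdef
  -- claim 1 : sAsc of complement
  have hAsc : sAsc s (lhCompl s r) =
      (Finset.univ.filter PA).card + (Finset.univ.filter PU).card := by
    unfold sAsc
    rw [ncard_eq_filter_card]
    rw [Finset.filter_congr (q := fun j => PA j ∨ PU j) ?_]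
    · rw [Finset.filter_or]
      apply Finset.card_union_of_disjoint
      rw [Finset.disjoint_left]
      rintro j hj1 hj2
      obtain ⟨h, hz2, hlt⟩ := (Finset.mem_filter.mp hj1).2
      obtain ⟨h', hz1, _⟩ := (Finset.mem_filter.mp hj2).2
      have := hgz j hz1
      have := hgpos ⟨(j:ℕ)+1, h⟩ hz2
      linarith
    · intro j _
      constructor
      · rintro ⟨h, hlt⟩
        by_cases hz1 : r j = 0
        · by_cases hz2 : r ⟨(j:ℕ)+1, h⟩ = 0
          · rw [hgz' j hz1, hgz' ⟨(j:ℕ)+1,h⟩ hz2] at hlt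
            exact absurd hlt (lt_irrefl _)
          · exact Or.inr ⟨h, hz1, hz2⟩
        · by_cases hz2 : r ⟨(j:ℕ)+1, h⟩ = 0
          · rw [hgz' ⟨(j:ℕ)+1,h⟩ hz2] at hlt
            exact absurd hlt (not_lt.mpr (hfr' j).1)
          · rw [lhCompl_frac s hs r j hz1, lhCompl_frac s hs r ⟨(j:ℕ)+1,h⟩ hz2] at hlt
            exact Or.inl ⟨h, hz2, by linarith⟩
      · rintro (⟨h, hz2, hlt⟩ | ⟨h, hz1, hz2⟩)
        · have hz1 : r j ≠ 0 := by
            intro hz1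
            rw [hgz j hz1] at hlt
            exact absurd hlt (not_lt.mpr (hfr ⟨(j:ℕ)+1,h⟩).1)
          refine ⟨h, ?_⟩
          rw [lhCompl_frac s hs r j hz1, lhCompl_frac s hs r ⟨(j:ℕ)+1,h⟩ hz2]
          linarith
        · refine ⟨h, ?_⟩
          rw [hgz' j hz1, lhCompl_frac s hs r ⟨(j:ℕ)+1,h⟩ hz2]
          have := (hfr ⟨(j:ℕ)+1,h⟩).2.1
          linarith
  -- claim 2 : sDes of r
  have hDes : sDes s r =
      (Finset.univ.filter PA).card + (Finset.univ.filter PD).card := by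
    unfold sDes
    rw [ncard_eq_filter_card]
    rw [Finset.filter_congr (q := fun j => PA j ∨ PD j) ?_]
    · rw [Finset.filter_or]
      apply Finset.card_union_of_disjoint
      rw [Finset.disjoint_left]
      rintro j hj1 hj2
      obtain ⟨h, hz2, _⟩ := (Finset.mem_filter.mp hj1).2
      obtain ⟨h', _, hz2'⟩ := (Finset.mem_filter.mp hj2).2
      exact hz2 hz2'
    · intro j _
      constructor
      · rintro ⟨h, hlt⟩
        by_cases hz2 : r ⟨(j:ℕ)+1, h⟩ = 0
        · have hz1 : r j ≠ 0 := by
            intro hz1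
            rw [hgz j hz1, hgz ⟨(j:ℕ)+1,h⟩ hz2] at hlt
            exact absurd hlt (lt_irrefl _)
          exact Or.inr ⟨h, hz1, hz2⟩
        · exact Or.inl ⟨h, hz2, hlt⟩
      · rintro (⟨h, hz2, hlt⟩ | ⟨h, hz1, hz2⟩)
        · exact ⟨h, hlt⟩
        · refine ⟨h, ?_⟩
          rw [hgz ⟨(j:ℕ)+1,h⟩ hz2]
          exact hgpos j hz1
  -- telescoping
  set χ : ℕ → ℤ := fun m => if h : m < n then (if r ⟨m,h⟩ = 0 then 0 else 1) else 0 with hχdef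
  have hUD : ((Finset.univ.filter PU).card : ℤ) - ((Finset.univ.filter PD).card : ℤ)
      = lhE hn r := by
    have cU : ((Finset.univ.filter PU).card : ℤ) = ∑ j : Fin n, if PU j then (1:ℤ) else 0 := by
      rw [Finset.card_filter]
      push_cast
      exact Finset.sum_congr rfl (fun j _ => by split <;> simp)
    have cD : ((Finset.univ.filter PD).card : ℤ) = ∑ j : Fin n, if PD j then (1:ℤ) else 0 := by
      rw [Finset.card_filter]
      push_cast
      exact Finset.sum_congr rfl (fun j _ => by split <;> simp)
    rw [cU, cD, ← Finset.sum_sub_distrib]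
    have hterm : ∀ j : Fin n, ((if PU j then (1:ℤ) else 0) - (if PD j then (1:ℤ) else 0))
        = (fun m => if h : m + 1 < n then χ (m+1) - χ m else 0) (j:ℕ) := by
      intro j
      simp only []
      by_cases h : (j:ℕ)+1 < n
      · rw [dif_pos h]
        have hPU : PU j ↔ (r j = 0 ∧ r ⟨(j:ℕ)+1, h⟩ ≠ 0) :=
          ⟨fun ⟨h', hb⟩ => hb, fun hb => ⟨h, hb⟩⟩
        have hPD : PD j ↔ (r j ≠ 0 ∧ r ⟨(j:ℕ)+1, h⟩ = 0) :=
          ⟨fun ⟨h', hb⟩ => hb, fun hb => ⟨h, hb⟩⟩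
        have hχ1 : χ ((j:ℕ)+1) = if r ⟨(j:ℕ)+1, h⟩ = 0 then 0 else 1 := dif_pos h
        have hχ0 : χ (j:ℕ) = if r j = 0 then 0 else 1 := by
          rw [hχdef]
          simp only []
          rw [dif_pos j.isLt]
        rw [hχ1, hχ0]
        by_cases hz1 : r j = 0 <;> by_cases hz2 : r ⟨(j:ℕ)+1, h⟩ = 0 <;>
          simp [hPU, hPD, hz1, hz2]
      · rw [dif_neg h]
        rw [if_neg (by rintro ⟨h', -⟩; exact h h'), if_neg (by rintro ⟨h', -⟩; exact h h')]
        ring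
    rw [Finset.sum_congr rfl (fun j _ => hterm j)]
    rw [Fin.sum_univ_eq_sum_range (fun m => if h : m + 1 < n then χ (m+1) - χ m else 0) n]
    have hsub : ∑ m ∈ Finset.range n, (if h : m + 1 < n then χ (m+1) - χ m else 0)
        = ∑ m ∈ Finset.range (n-1), (if h : m + 1 < n then χ (m+1) - χ m else 0) :=
      (Finset.sum_subset (Finset.range_subset_range.mpr (by omega))
        (fun x _ hx => by rw [dif_neg (by simp at hx ⊢; omega)])).symm
    rw [hsub]
    rw [Finset.sum_congr rfl (fun m hm => dif_pos (by simp at hm; omega))]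
    rw [Finset.sum_range_sub χ (n-1)]
    have hχz : χ 0 = 0 := by
      rw [hχdef]
      simp only []
      rw [dif_pos hn]
      rw [if_pos ?_]
      have := hr ⟨0, hn⟩
      rw [h1] at this
      omega
    have hχl : χ (n-1) = lhE hn r := by
      rw [hχdef]
      simp only []
      rw [dif_pos (by omega : n - 1 < n)]
      rfl
    rw [hχz, hχl]
    ring
  rw [hAsc, hDes]
  push_cast
  linarith [hUD]

lemma step2 {n : ℕ} (hn : 0 < n) (s : Fin n → ℕ) (hs : ∀ i, 0 < s i)
    (h1 : s ⟨0,hn⟩ = 1) (i : ℕ) :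
    {r | r ∈ lhPsi s ∧ (sDes s r : ℤ) + lhE hn r = (i:ℤ)}
      = lhCompl s '' {r | r ∈ lhPsi s ∧ sAsc s r = i} := by
  ext t
  simp only [Set.mem_setOf_eq, Set.mem_image]
  constructor
  · rintro ⟨hΨ, hsum⟩
    refine ⟨lhCompl s t, ⟨lhCompl_mem s hs t hΨ, ?_⟩, lhCompl_invol s hs t hΨ⟩
    have hkc : (sAsc s (lhCompl s t) : ℤ) = (i:ℤ) :=
      (key_count hn s hs h1 t hΨ).trans hsum
    exact_mod_cast hkc
  · rintro ⟨u, ⟨hΨu, hAsc⟩, rfl⟩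
    refine ⟨lhCompl_mem s hs u hΨu, ?_⟩
    have hkc := key_count hn s hs h1 (lhCompl s u) (lhCompl_mem s hs u hΨu)
    rw [lhCompl_invol s hs u hΨu, hAsc] at hkc
    exact hkc.symm

/-- if `s_1 = 1`, then `ℓ^i(Par_{s*}) = #{r ∈ Ψ_n : asc_s(r) = i}`. -/
theorem stmt_18 (n : ℕ) (hn : 0 < n) (s : Fin n → ℕ) (hs : ∀ i, 0 < s i)
    (h1 : s ⟨0, hn⟩ = 1) (i : ℕ) :
    lhEll (lhPar (Fin.snoc s 1)) i = Set.ncard {r ∈ lhPsi s | sAsc s r = i} := by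
  have h0 : lhEll (lhPar (Fin.snoc s 1)) i
      = Set.ncard {x : Fin (n+1) → ℤ | (fun k => (x k : ℝ)) ∈ lhPar (Fin.snoc s 1) ∧
        ∀ j : Fin (n+1), (j : ℕ) = (n+1) - 1 → x j = (i : ℤ)} := rfl
  have hinj : Set.InjOn (lhCompl s) {r | r ∈ lhPsi s ∧ sAsc s r = i} := by
    intro a ha b hb heq
    rw [← lhCompl_invol s hs a ha.1, ← lhCompl_invol s hs b hb.1, heq]
  rw [h0, step1_card hn s hs h1 i, step2 hn s hs h1 i,
    Set.ncard_image_of_injOn hinj]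
end

section
/- Let s = (1, 2, …, n) and s* = (1, 2, …, n, 1). For every lattice point x = (x_1,…,x_n,x_{n+1}) ∈ Par_{s*} ∩ ℤ^{n+1}, define z_i = (−x_i) mod i for 1 ≤ i ≤ n (so z_i ∈ {0,…,i−1}). Then the last coordinate x_{n+1} equals the number of (regular) ascents of the sequence (z_1,…,z_n), which also equals the number of (regular) descents of the reversed sequence (z_n,…,z_1). Moreover, the map x ↦ (z_n, z_{n−1}, …, z_1) is a bijection from Par_{s*} ∩ ℤ^{n+1} onto the set of inversion sequences of length n. -/
/-!
Write a lattice point as `x_k = s_k c_k - r_k` with `r_k = (-x_k) mod s_k ∈ [0, s_k)`, so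
that `c_k = ⌈x_k / s_k⌉`. Since `r_k / s_k ∈ [0, 1)`, the condition defining `Par_s` (that
`x_1 / s_1` and every increment `x_{k+1} / s_{k+1} - x_k / s_k` lie in `[0, 1)`) says
precisely that `c_1 = [0 < r_1]` and `c_{k+1} - c_k = [r_k / s_k < r_{k+1} / s_{k+1}]`.
Hence the lattice points of `Par_s` correspond bijectively to the residue vectors in
`∏ [0, s_k)`. For `s* = (1, …, n, 1)` we have `r_1 = r_{n+1} = 0`, so `x_{n+1} = c_{n+1}`
counts the `k < n` with `r_k / k < r_{k+1} / (k + 1)`; as `r_k < k`, these are the ascents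
of `(r_1, …, r_n)`.
-/

open Finset

theorem Fin.partialSum_last {M : Type*} [AddCommMonoid M] {n : ℕ} (f : Fin n → M) :
    Fin.partialSum f (Fin.last n) = ∑ i, f i := by
  simp [Fin.partialSum, List.take_of_length_le, List.sum_ofFn]

theorem Fin.sum_Iic_succ {M : Type*} [AddCommMonoid M] {n : ℕ} (c : Fin (n + 1) → M)
    (i : Fin n) : ∑ j ∈ Iic i.succ, c j = ∑ j ∈ Iic i.castSucc, c j + c i.succ := by
  rw [show Iic i.castSucc = Iio i.succ from rfl, ← Finset.Iio_insert, sum_insert (by simp),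
    add_comm]

theorem Fin.forall_eq_sum_Iic_iff {M : Type*} [AddCommGroup M] {n : ℕ} (q c : Fin (n + 1) → M) :
    (∀ i, q i = ∑ j ∈ Iic i, c j) ↔
      c 0 = q 0 ∧ ∀ i : Fin n, c i.succ = q i.succ - q i.castSucc := by
  constructor
  · intro h
    refine ⟨by rw [h 0, ← bot_eq_zero, Iic_bot, sum_singleton], fun i => ?_⟩
    rw [h, h, Fin.sum_Iic_succ]
    abel
  · rintro ⟨h0, hsucc⟩ i
    induction i using Fin.induction with
    | zero => rw [← h0, ← bot_eq_zero, Iic_bot, sum_singleton]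
    | succ i ih => rw [Fin.sum_Iic_succ, ← ih, hsucc]; abel

theorem div_sub_div_mem_Ico_iff {K : Type*} [Field K] [LinearOrder K] [IsStrictOrderedRing K]
    {a b x y : K} (ha : 0 < a) (hb : 0 < b) :
    y / b - x / a ∈ Set.Ico 0 1 ↔ 0 ≤ a * y - b * x ∧ a * y - b * x < a * b := by
  rw [div_sub_div _ _ hb.ne' ha.ne', Set.mem_Ico, le_div_iff₀ (by positivity),
    div_lt_one (by positivity)]
  constructor <;> rintro ⟨h1, h2⟩ <;> constructor <;> linarith

theorem sum_smul_lhVec_apply {N : ℕ} (s : Fin N → ℕ) (c : Fin N → ℝ) (i : Fin N) :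
    (∑ j, c j • lhVec s j) i = (∑ j ∈ Iic i, c j) * s i := by
  simp only [Finset.sum_apply, Pi.smul_apply, smul_eq_mul, lhVec, mul_ite, mul_zero,
    Finset.sum_ite, sum_const_zero, add_zero, Finset.sum_mul]
  congr 1
  ext j
  simp

theorem mem_lhPar_iff_s19 {N : ℕ} {s : Fin (N + 1) → ℕ} (hs : ∀ i, 0 < s i) (x : Fin (N + 1) → ℝ) :
    x ∈ lhPar s ↔ x 0 / s 0 ∈ Set.Ico 0 1 ∧
      ∀ i : Fin N, x i.succ / s i.succ - x i.castSucc / s i.castSucc ∈ Set.Ico 0 1 := by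
  have hx (c : Fin (N + 1) → ℝ) :
      x = ∑ j, c j • lhVec s j ↔ ∀ i, x i / s i = ∑ j ∈ Iic i, c j := by
    simp only [funext_iff, sum_smul_lhVec_apply]
    exact forall_congr' fun i => (div_eq_iff (by exact_mod_cast (hs i).ne')).symm
  simp only [lhPar, Set.mem_ofPred_eq, hx, Fin.forall_eq_sum_Iic_iff]
  constructor
  · rintro ⟨c, hc, h0, hsucc⟩
    exact ⟨h0 ▸ hc 0, fun i => hsucc i ▸ hc i.succ⟩
  · rintro ⟨h0, hsucc⟩
    exact ⟨Fin.cons (x 0 / s 0) fun i => x i.succ / s i.succ - x i.castSucc / s i.castSucc,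
      Fin.cases h0 hsucc, by simp, by simp⟩

theorem intCast_mem_lhPar_iff {N : ℕ} {s : Fin (N + 1) → ℕ} (hs : ∀ i, 0 < s i)
    (x : Fin (N + 1) → ℤ) :
    (fun k => (x k : ℝ)) ∈ lhPar s ↔ (0 ≤ x 0 ∧ x 0 < s 0) ∧
      ∀ i : Fin N, 0 ≤ s i.castSucc * x i.succ - s i.succ * x i.castSucc ∧
        s i.castSucc * x i.succ - s i.succ * x i.castSucc < s i.castSucc * s i.succ := by
  have hs' (i : Fin (N + 1)) : (0 : ℝ) < s i := by exact_mod_cast hs i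
  rw [mem_lhPar_iff_s19 hs]
  simp only [div_sub_div_mem_Ico_iff (hs' _) (hs' _), Set.mem_Ico, le_div_iff₀ (hs' 0),
    div_lt_one (hs' 0), zero_mul]
  norm_cast

theorem Int.eq_of_mul_sub_mem_Ico {M E d e : ℤ} (hd : 0 ≤ M * d - E ∧ M * d - E < M)
    (he : 0 ≤ M * e - E ∧ M * e - E < M) : d = e := by
  have hM : 0 ≤ M := by linarith
  have h1 : d - e < 1 := lt_of_mul_lt_mul_left (by linarith) hM
  have h2 : -1 < d - e := lt_of_mul_lt_mul_left (by linarith) hM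
  omega

theorem mul_sub_mem_Ico_iff_eq_ite {a b r r' d : ℤ} (hr : 0 ≤ r) (hra : r < a) (hr' : 0 ≤ r')
    (hr'b : r' < b) :
    (0 ≤ a * b * d - (a * r' - b * r) ∧ a * b * d - (a * r' - b * r) < a * b) ↔
      d = if b * r < a * r' then 1 else 0 := by
  have hite : 0 ≤ a * b * (if b * r < a * r' then 1 else 0) - (a * r' - b * r) ∧
      a * b * (if b * r < a * r' then 1 else 0) - (a * r' - b * r) < a * b := by
    split_ifs <;> constructor <;> nlinarith
  exact ⟨fun h => Int.eq_of_mul_sub_mem_Ico h hite, fun h => h ▸ hite⟩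

def lhParLattice {N : ℕ} (s : Fin N → ℕ) : Set (Fin N → ℤ) :=
  {x | (fun k => (x k : ℝ)) ∈ lhPar s}

def lhResidue {N : ℕ} (s : Fin N → ℕ) (x : Fin N → ℤ) : Fin N → ℤ :=
  fun k => (-x k) % s k

/-- Indicator of `r i / s i < r (i + 1) / s (i + 1)`. -/
def lhJump {N : ℕ} (s : Fin (N + 1) → ℕ) (r : Fin (N + 1) → ℤ) (i : Fin N) : ℤ :=
  if (s i.succ : ℤ) * r i.castSucc < s i.castSucc * r i.succ then 1 else 0

/-- The values `⌈x k / s k⌉` at the lattice point `x` of `Par_s` with residues `r`. -/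
def lhLevel {N : ℕ} (s : Fin (N + 1) → ℕ) (r : Fin (N + 1) → ℤ) (k : Fin (N + 1)) : ℤ :=
  (if 0 < r 0 then 1 else 0) + Fin.partialSum (lhJump s r) k

def lhLift {N : ℕ} (s : Fin (N + 1) → ℕ) (r : Fin (N + 1) → ℤ) : Fin (N + 1) → ℤ :=
  fun k => s k * lhLevel s r k - r k

section LatticePoints

variable {N : ℕ} {s : Fin (N + 1) → ℕ}

theorem eq_lhLevel_iff (r c : Fin (N + 1) → ℤ) :
    c = lhLevel s r ↔ c 0 = (if 0 < r 0 then 1 else 0) ∧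
      ∀ i : Fin N, c i.succ = c i.castSucc + lhJump s r i := by
  constructor
  · rintro rfl
    simp [lhLevel, Fin.partialSum_succ, add_assoc]
  · rintro ⟨h0, hsucc⟩
    funext k
    induction k using Fin.induction with
    | zero => simp [lhLevel, h0]
    | succ i ih => simp [hsucc, ih, lhLevel, Fin.partialSum_succ, add_assoc]

theorem lhLevel_last (r : Fin (N + 1) → ℤ) :
    lhLevel s r (Fin.last N) = (if 0 < r 0 then 1 else 0) + ∑ i, lhJump s r i := by
  rw [lhLevel, Fin.partialSum_last]

theorem sum_lhJump (r : Fin (N + 1) → ℤ) :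
    ∑ i, lhJump s r i =
      {i : Fin N | (s i.succ : ℤ) * r i.castSucc < s i.castSucc * r i.succ}.ncard := by
  simp [lhJump, sum_boole, Set.ncard_eq_toFinset_card']

theorem mul_sub_mem_lhParLattice_iff (hs : ∀ i, 0 < s i) {r : Fin (N + 1) → ℤ}
    (hr : r ∈ lhPsi s) (c : Fin (N + 1) → ℤ) :
    (fun k => s k * c k - r k) ∈ lhParLattice s ↔ c = lhLevel s r := by
  rw [lhParLattice, Set.mem_ofPred_eq, intCast_mem_lhPar_iff hs, eq_lhLevel_iff]
  refine and_congr ?_ (forall_congr' fun i => ?_)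
  · -- a step from a virtual coordinate `0` with `s = 1`
    simpa using mul_sub_mem_Ico_iff_eq_ite (a := 1) (d := c 0) le_rfl one_pos (hr 0).1 (hr 0).2
  · rw [← sub_eq_iff_eq_add', lhJump,
      ← mul_sub_mem_Ico_iff_eq_ite (hr _).1 (hr _).2 (hr _).1 (hr _).2]
    ring_nf

theorem lhResidue_mem_lhPsi (hs : ∀ i, 0 < s i) (x : Fin (N + 1) → ℤ) :
    lhResidue s x ∈ lhPsi s := fun k =>
  ⟨Int.emod_nonneg _ (by exact_mod_cast (hs k).ne'),
    Int.emod_lt_of_pos _ (by exact_mod_cast hs k)⟩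

theorem lhResidue_lhLift {r : Fin (N + 1) → ℤ} (hr : r ∈ lhPsi s) :
    lhResidue s (lhLift s r) = r := by
  funext k
  rw [lhResidue, lhLift, show -(s k * lhLevel s r k - r k) = r k + s k * -lhLevel s r k by ring,
    Int.add_mul_emod_self_left, Int.emod_eq_of_lt (hr k).1 (hr k).2]

theorem lhLift_mem_lhParLattice (hs : ∀ i, 0 < s i) {r : Fin (N + 1) → ℤ} (hr : r ∈ lhPsi s) :
    lhLift s r ∈ lhParLattice s :=
  (mul_sub_mem_lhParLattice_iff hs hr _).2 rfl

theorem lhLift_lhResidue (hs : ∀ i, 0 < s i) {x : Fin (N + 1) → ℤ} (hx : x ∈ lhParLattice s) :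
    lhLift s (lhResidue s x) = x := by
  have hdecomp : x = fun k => s k * -((-x k) / s k) - lhResidue s x k := by
    funext k
    have := Int.emod_add_mul_ediv (-x k) (s k)
    rw [lhResidue]
    linarith
  have hlevel := (mul_sub_mem_lhParLattice_iff hs (lhResidue_mem_lhPsi hs x) _).1 (hdecomp ▸ hx)
  show (fun k => s k * lhLevel s (lhResidue s x) k - lhResidue s x k) = x
  rw [← hlevel]
  exact hdecomp.symm

theorem lhResidue_bijOn (hs : ∀ i, 0 < s i) :
    Set.BijOn (lhResidue s) (lhParLattice s) (lhPsi s) :=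
  Set.InvOn.bijOn ⟨fun _ hx => lhLift_lhResidue hs hx, fun _ hr => lhResidue_lhLift hr⟩
    (fun x _ => lhResidue_mem_lhPsi hs x) (fun _ hr => lhLift_mem_lhParLattice hs hr)

theorem last_eq_lhLevel (hs : ∀ i, 0 < s i) (hlast : s (Fin.last N) = 1) {x : Fin (N + 1) → ℤ}
    (hx : x ∈ lhParLattice s) : x (Fin.last N) = lhLevel s (lhResidue s x) (Fin.last N) := by
  conv_lhs => rw [← lhLift_lhResidue hs hx]
  simp [lhLift, lhResidue, hlast]

end LatticePoints

theorem rDes_comp_rev {N : ℕ} (r : Fin N → ℤ) : rDes (fun i => r (Fin.rev i)) = rAsc r := by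
  refine Set.ncard_congr (fun i hi => ⟨N - 2 - i, by obtain ⟨h, -⟩ := hi; omega⟩) ?_ ?_ ?_
  · rintro i ⟨h, hlt⟩
    refine ⟨by dsimp only; omega, ?_⟩
    convert hlt using 2 <;> ext <;> simp only [Fin.val_rev] <;> omega
  · intro i j hi hj hij
    have := hi.1
    have := hj.1
    simp only [Fin.ext_iff] at hij ⊢
    omega
  · rintro j ⟨h, hlt⟩
    refine ⟨⟨N - 2 - j, by omega⟩, ⟨by dsimp only; omega, ?_⟩, by ext; dsimp only; omega⟩
    convert hlt using 2 <;> ext <;> simp only [Fin.val_rev] <;> omega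

def sStar (n : ℕ) : Fin (n + 1) → ℕ := Fin.snoc (fun i : Fin n => (i : ℕ) + 1) 1

section sStar

variable {n : ℕ}

@[simp]
theorem sStar_castSucc (i : Fin n) : sStar n i.castSucc = i + 1 := Fin.snoc_castSucc ..

@[simp]
theorem sStar_last : sStar n (Fin.last n) = 1 := Fin.snoc_last ..

theorem sStar_zero : sStar n 0 = 1 := by
  cases n <;> rfl

theorem sStar_pos (i : Fin (n + 1)) : 0 < sStar n i := by
  induction i using Fin.lastCases <;> simp

theorem lhResidue_sStar_castSucc (x : Fin (n + 1) → ℤ) (i : Fin n) :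
    lhResidue (sStar n) x i.castSucc = (-x i.castSucc) % ((i : ℕ) + 1 : ℤ) := by
  simp [lhResidue]

theorem sStar_ascent_iff {r : Fin (n + 1) → ℤ} (hr : r ∈ lhPsi (sStar n)) (i : Fin n) :
    (sStar n i.succ : ℤ) * r i.castSucc < sStar n i.castSucc * r i.succ ↔
      ∃ h : (i : ℕ) + 1 < n, r i.castSucc < r (⟨i + 1, h⟩ : Fin n).castSucc := by
  obtain ⟨hr0, hr1⟩ := hr i.castSucc
  simp only [sStar_castSucc] at hr1 ⊢
  by_cases h : (i : ℕ) + 1 < n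
  · have hsucc : i.succ = (⟨i + 1, h⟩ : Fin n).castSucc := rfl
    obtain ⟨hr0', hr1'⟩ := hr i.succ
    rw [hsucc, sStar_castSucc] at hr1' ⊢
    simp only [h, exists_true_left]
    push_cast at hr1' ⊢
    constructor <;> intro <;> nlinarith
  · have hsucc : i.succ = Fin.last n := Fin.ext (by simp only [Fin.val_succ, Fin.val_last]; omega)
    obtain ⟨-, hlast1⟩ := hr (Fin.last n)
    simp only [hsucc, sStar_last, Nat.cast_one] at hlast1 ⊢
    simp only [h, IsEmpty.exists_iff, iff_false, not_lt]
    push_cast at hr1 ⊢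
    nlinarith

theorem last_eq_rAsc {x : Fin (n + 1) → ℤ} (hx : x ∈ lhParLattice (sStar n)) :
    x (Fin.last n) = rAsc (fun i => lhResidue (sStar n) x i.castSucc) := by
  have hr := lhResidue_mem_lhPsi sStar_pos x
  have hr0 : lhResidue (sStar n) x 0 = 0 := by simp [lhResidue, sStar_zero]
  rw [last_eq_lhLevel sStar_pos sStar_last hx, lhLevel_last, sum_lhJump, hr0,
    if_neg (lt_irrefl 0), zero_add, rAsc]
  simp only [sStar_ascent_iff hr]

theorem bijOn_comp_rev_castSucc :
    Set.BijOn (fun (r : Fin (n + 1) → ℤ) (i : Fin n) => r (Fin.rev i).castSucc)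
      (lhPsi (sStar n)) {t : Fin n → ℤ | ∀ k : Fin n, 0 ≤ t k ∧ t k + k < n} := by
  refine ⟨fun r hr k => ?_, fun r hr r' hr' h => ?_, fun t ht => ?_⟩
  · have := hr (Fin.rev k).castSucc
    simp only [sStar_castSucc, Fin.val_rev] at this ⊢
    omega
  · funext k
    induction k using Fin.lastCases with
    | last =>
      have := hr (Fin.last n)
      have := hr' (Fin.last n)
      simp only [sStar_last] at *
      omega
    | cast i => simpa using congrFun h (Fin.rev i)
  · refine ⟨Fin.snoc (fun j => t (Fin.rev j)) 0, fun k => ?_, by funext i; simp⟩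
    induction k using Fin.lastCases with
    | last => simp
    | cast j =>
      have := ht (Fin.rev j)
      simp only [Fin.snoc_castSucc, sStar_castSucc, Fin.val_rev] at this ⊢
      omega

end sStar

/-- for `s = (1,2,…,n)` and `x ∈ Par_{s*} ∩ ℤ^{n+1}` with
`z_i = (−x_i) mod i`, the last coordinate of `x` equals `asc(z)` and
`des(reverse(z))`; moreover `x ↦ reverse(z)` is a bijection from
`Par_{s*} ∩ ℤ^{n+1}` onto the inversion sequences of length `n`. -/
theorem stmt_19 (n : ℕ) :
    (∀ x : Fin (n + 1) → ℤ,
      (fun k => (x k : ℝ)) ∈ lhPar (Fin.snoc (fun i : Fin n => (i : ℕ) + 1) 1) →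
      (x (Fin.last n) =
          (rAsc (fun i : Fin n => (-(x i.castSucc)) % (((i : ℕ) : ℤ) + 1)) : ℤ) ∧
        x (Fin.last n) =
          (rDes (fun i : Fin n =>
            (-(x (Fin.rev i).castSucc)) % ((((Fin.rev i) : ℕ) : ℤ) + 1)) : ℤ))) ∧
    Set.BijOn
      (fun (x : Fin (n + 1) → ℤ) (i : Fin n) =>
        (-(x (Fin.rev i).castSucc)) % ((((Fin.rev i) : ℕ) : ℤ) + 1))
      {x : Fin (n + 1) → ℤ |
        (fun k => (x k : ℝ)) ∈ lhPar (Fin.snoc (fun i : Fin n => (i : ℕ) + 1) 1)}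
      {r : Fin n → ℤ | ∀ k : Fin n, 0 ≤ r k ∧ r k + ((k : ℕ) : ℤ) < (n : ℤ)} := by
  refine ⟨fun x hx => ?_, ?_⟩
  · have hasc := last_eq_rAsc hx
    simp only [lhResidue_sStar_castSucc] at hasc
    exact ⟨hasc, hasc.trans (by exact_mod_cast (rDes_comp_rev _).symm)⟩
  · refine (bijOn_comp_rev_castSucc.comp (lhResidue_bijOn sStar_pos)).congr fun x _ => ?_
    funext i
    simp [lhResidue_sStar_castSucc]
end
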